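/- arXiv:1212.0243 — 9 statements merged into one kernel-verified Lean document; each statement's English description precedes it below -/
import Mathlib

section
/- Let g : (0,1] → ℝ be a nonnegative, monotone non-increasing, square-integrable function, and define h(x) = ∫_x^1 g(u)/u du. Then ∫_0^1 h(x)² dx ≤ 4 ∫_0^1 g(x)² dx. -/
/-!
Write `|h(x)| ≤ ∫_x^1 (|g(u)| u^{-1/4}) · u^{-3/4} du`. Cauchy–Schwarz gives
`h(x)² ≤ 2 x^{-1/2} ∫_x^1 g(u)² u^{-1/2} du`. Integrating over `x` and exchanging the order of
integration, the inner integral `∫_0^u 2 x^{-1/2} dx = 4 u^{1/2}` cancels the weight `u^{-1/2}`,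
leaving `4 ∫_0^1 g²`. All estimates are carried out for `ℝ≥0∞`-valued integrals, where
Tonelli's theorem needs no integrability hypotheses.
-/

open MeasureTheory Set
open scoped ENNReal

lemma lintegral_Ioi_ofReal_rpow {a c : ℝ} (ha : a < -1) (hc : 0 < c) :
    ∫⁻ t in Ioi c, ENNReal.ofReal (t ^ a) = ENNReal.ofReal (-c ^ (a + 1) / (a + 1)) := by
  rw [← integral_Ioi_rpow_of_lt ha hc, ofReal_integral_eq_lintegral_ofReal
    (integrableOn_Ioi_rpow_of_lt ha hc)]
  filter_upwards [ae_restrict_mem measurableSet_Ioi] with t ht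
  exact Real.rpow_nonneg (hc.trans ht).le a

lemma lintegral_Ioo_zero_ofReal_rpow {a c : ℝ} (ha : -1 < a) (hc : 0 ≤ c) :
    ∫⁻ t in Ioo 0 c, ENNReal.ofReal (t ^ a) = ENNReal.ofReal (c ^ (a + 1) / (a + 1)) := by
  have hint : IntegrableOn (fun t : ℝ => t ^ a) (Ioc 0 c) :=
    (intervalIntegrable_iff_integrableOn_Ioc_of_le hc).1
      (intervalIntegral.intervalIntegrable_rpow' ha)
  rw [Measure.restrict_congr_set Ioo_ae_eq_Ioc, ← ofReal_integral_eq_lintegral_ofReal hint,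
    ← intervalIntegral.integral_of_le hc, integral_rpow (Or.inl ha),
    Real.zero_rpow (by linarith), sub_zero]
  filter_upwards [ae_restrict_mem measurableSet_Ioc] with t ht
  exact Real.rpow_nonneg ht.1.le a

lemma ofReal_rpow_mul_ofReal_rpow {u : ℝ} (hu : 0 < u) (a b : ℝ) :
    ENNReal.ofReal (u ^ a) * ENNReal.ofReal (u ^ b) = ENNReal.ofReal (u ^ (a + b)) := by
  rw [← ENNReal.ofReal_mul (Real.rpow_nonneg hu.le a), Real.rpow_add hu]

lemma sq_lintegral_mul_le {α : Type*} [MeasurableSpace α] {μ : Measure α} {f g : α → ℝ≥0∞}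
    (hf : AEMeasurable f μ) (hg : AEMeasurable g μ) :
    (∫⁻ a, f a * g a ∂μ) ^ 2 ≤ (∫⁻ a, f a ^ 2 ∂μ) * ∫⁻ a, g a ^ 2 ∂μ := by
  have h := ENNReal.lintegral_mul_le_Lp_mul_Lq μ Real.HolderConjugate.two_two hf hg
  simp only [Pi.mul_apply, ENNReal.rpow_two] at h
  calc (∫⁻ a, f a * g a ∂μ) ^ 2
      ≤ ((∫⁻ a, f a ^ 2 ∂μ) ^ (1 / 2 : ℝ) * (∫⁻ a, g a ^ 2 ∂μ) ^ (1 / 2 : ℝ)) ^ 2 := by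
        gcongr
    _ = _ := by
        rw [mul_pow, ← ENNReal.rpow_natCast, ← ENNReal.rpow_natCast, ← ENNReal.rpow_mul,
          ← ENNReal.rpow_mul]
        norm_num

lemma lintegral_mul_setLIntegral_Ioi_swap {μ : Measure ℝ} [SFinite μ] {φ ψ : ℝ → ℝ≥0∞}
    (hφ : Measurable φ) (hψ : Measurable ψ) :
    ∫⁻ x, φ x * ∫⁻ u in Ioi x, ψ u ∂μ ∂μ = ∫⁻ u, ψ u * ∫⁻ x in Iio u, φ x ∂μ ∂μ := by
  have hswap : ∀ x u, φ x * (Ioi x).indicator ψ u = ψ u * (Iio u).indicator φ x := by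
    intro x u
    by_cases h : x < u <;> simp [h, mul_comm]
  have hmeas : Measurable (Function.uncurry fun x u => φ x * (Ioi x).indicator ψ u) := by
    change Measurable fun p : ℝ × ℝ => φ p.1 * (if p.1 < p.2 then ψ p.2 else 0)
    exact (hφ.comp measurable_fst).mul <| Measurable.ite
      (measurableSet_lt measurable_fst measurable_snd) (hψ.comp measurable_snd) measurable_const
  calc ∫⁻ x, φ x * ∫⁻ u in Ioi x, ψ u ∂μ ∂μ
      = ∫⁻ x, ∫⁻ u, φ x * (Ioi x).indicator ψ u ∂μ ∂μ := by
        simp_rw [lintegral_const_mul _ (hψ.indicator measurableSet_Ioi),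
          lintegral_indicator measurableSet_Ioi]
    _ = ∫⁻ u, ∫⁻ x, ψ u * (Iio u).indicator φ x ∂μ ∂μ := by
        simp_rw [← hswap]
        exact lintegral_lintegral_swap hmeas.aemeasurable
    _ = _ := by
        simp_rw [lintegral_const_mul _ (hφ.indicator measurableSet_Iio),
          lintegral_indicator measurableSet_Iio]

lemma sq_setLIntegral_Ioi_div_le {F : ℝ → ℝ≥0∞} (hF : Measurable F) {x : ℝ} (hx : 0 < x) :
    (∫⁻ u in Ioi x, F u / ENNReal.ofReal u) ^ 2 ≤
      2 * ENNReal.ofReal (x ^ (-1 / 2 : ℝ)) *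
        ∫⁻ u in Ioi x, F u ^ 2 * ENNReal.ofReal (u ^ (-1 / 2 : ℝ)) := by
  set f : ℝ → ℝ≥0∞ := fun u => F u * ENNReal.ofReal (u ^ (-1 / 4 : ℝ))
  set w : ℝ → ℝ≥0∞ := fun u => ENNReal.ofReal (u ^ (-3 / 4 : ℝ))
  have hfw : ∀ u ∈ Ioi x, F u / ENNReal.ofReal u = f u * w u := by
    intro u hu
    have hu0 : 0 < u := hx.trans hu
    rw [mul_assoc, ofReal_rpow_mul_ofReal_rpow hu0, div_eq_mul_inv,
      ← ENNReal.ofReal_inv_of_pos hu0, ← Real.rpow_neg_one]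
    norm_num
  have hf2 : ∀ u ∈ Ioi x, f u ^ 2 = F u ^ 2 * ENNReal.ofReal (u ^ (-1 / 2 : ℝ)) := by
    intro u hu
    rw [mul_pow, sq (ENNReal.ofReal _), ofReal_rpow_mul_ofReal_rpow (hx.trans hu)]
    norm_num
  have hw2 : ∀ u ∈ Ioi x, w u ^ 2 = ENNReal.ofReal (u ^ (-3 / 2 : ℝ)) := by
    intro u hu
    rw [sq, ofReal_rpow_mul_ofReal_rpow (hx.trans hu)]
    norm_num
  rw [setLIntegral_congr_fun measurableSet_Ioi hfw]
  calc (∫⁻ u in Ioi x, f u * w u) ^ 2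
      ≤ (∫⁻ u in Ioi x, f u ^ 2) * ∫⁻ u in Ioi x, w u ^ 2 :=
        sq_lintegral_mul_le (by fun_prop) (by fun_prop)
    _ = _ := by
        rw [setLIntegral_congr_fun measurableSet_Ioi hf2,
          setLIntegral_congr_fun measurableSet_Ioi hw2, lintegral_Ioi_ofReal_rpow (by norm_num) hx,
          mul_comm,
          show -x ^ (-3 / 2 + 1 : ℝ) / (-3 / 2 + 1) = 2 * x ^ (-1 / 2 : ℝ) by norm_num; ring,
          ENNReal.ofReal_mul zero_le_two, ENNReal.ofReal_ofNat]

theorem lintegral_sq_setLIntegral_Ioi_div_le {F : ℝ → ℝ≥0∞} (hF : Measurable F) :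
    ∫⁻ x in Ioi 0, (∫⁻ u in Ioi x, F u / ENNReal.ofReal u) ^ 2 ≤ 4 * ∫⁻ u in Ioi 0, F u ^ 2 := by
  set φ : ℝ → ℝ≥0∞ := fun x => 2 * ENNReal.ofReal (x ^ (-1 / 2 : ℝ))
  set ψ : ℝ → ℝ≥0∞ := fun u => F u ^ 2 * ENNReal.ofReal (u ^ (-1 / 2 : ℝ))
  calc ∫⁻ x in Ioi 0, (∫⁻ u in Ioi x, F u / ENNReal.ofReal u) ^ 2
      ≤ ∫⁻ x in Ioi 0, φ x * ∫⁻ u in Ioi x, ψ u :=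
        setLIntegral_mono' measurableSet_Ioi fun x hx => sq_setLIntegral_Ioi_div_le hF hx
    _ = ∫⁻ x in Ioi 0, φ x * ∫⁻ u in Ioi x, ψ u ∂volume.restrict (Ioi 0) := by
        refine setLIntegral_congr_fun measurableSet_Ioi fun x hx => ?_
        rw [Measure.restrict_restrict measurableSet_Ioi, Ioi_inter_Ioi, sup_eq_left.2 hx.le]
    _ = ∫⁻ u in Ioi 0, ψ u * ∫⁻ x in Iio u, φ x ∂volume.restrict (Ioi 0) :=
        lintegral_mul_setLIntegral_Ioi_swap (by fun_prop) (by fun_prop)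
    _ = ∫⁻ u in Ioi 0, 4 * F u ^ 2 := by
        refine setLIntegral_congr_fun measurableSet_Ioi fun u (hu : 0 < u) => ?_
        rw [Measure.restrict_restrict measurableSet_Iio, Iio_inter_Ioi,
          lintegral_const_mul _ (by fun_prop), lintegral_Ioo_zero_ofReal_rpow (by norm_num) hu.le,
          show u ^ (-1 / 2 + 1 : ℝ) / (-1 / 2 + 1) = 2 * u ^ (1 / 2 : ℝ) by norm_num; ring,
          ENNReal.ofReal_mul zero_le_two, ENNReal.ofReal_ofNat]
        calc ψ u * (2 * (2 * ENNReal.ofReal (u ^ (1 / 2 : ℝ))))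
            = 4 * F u ^ 2 *
                (ENNReal.ofReal (u ^ (-1 / 2 : ℝ)) * ENNReal.ofReal (u ^ (1 / 2 : ℝ))) := by
              ring
          _ = 4 * F u ^ 2 := by
              rw [ofReal_rpow_mul_ofReal_rpow hu]
              norm_num
    _ = _ := lintegral_const_mul _ (by fun_prop)

lemma enorm_div_ofReal {a b : ℝ} (hb : 0 < b) : ‖a / b‖ₑ = ‖a‖ₑ / ENNReal.ofReal b := by
  rw [← Real.enorm_of_nonneg hb.le, enorm_eq_nnnorm, enorm_eq_nnnorm, enorm_eq_nnnorm,
    nnnorm_div, ENNReal.coe_div (by simpa using hb.ne')]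

lemma integral_le_toReal_lintegral_enorm {α : Type*} [MeasurableSpace α] {μ : Measure α}
    (f : α → ℝ) : ∫ a, f a ∂μ ≤ (∫⁻ a, ‖f a‖ₑ ∂μ).toReal := by
  refine (Real.le_norm_self _).trans ((norm_integral_le_lintegral_norm _).trans_eq ?_)
  simp only [ofReal_norm]

theorem lintegral_Ioc_enorm_sq_intervalIntegral_div_le {g : ℝ → ℝ} (hg : Measurable g) (b : ℝ) :
    ∫⁻ x in Ioc 0 b, ‖(∫ u in x..b, g u / u) ^ 2‖ₑ ≤ 4 * ∫⁻ u in Ioc 0 b, ‖g u ^ 2‖ₑ := by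
  set F : ℝ → ℝ≥0∞ := (Ioc 0 b).indicator fun u => ‖g u‖ₑ
  have hF : Measurable F := hg.enorm.indicator measurableSet_Ioc
  have hinner :
      ∀ x ∈ Ioc 0 b, ‖∫ u in x..b, g u / u‖ₑ ≤ ∫⁻ u in Ioi x, F u / ENNReal.ofReal u := by
    intro x hx
    rw [intervalIntegral.integral_of_le hx.2]
    refine (enorm_integral_le_lintegral_enorm _).trans
      (le_of_eq_of_le ?_ (lintegral_mono_set (Ioc_subset_Ioi_self : Ioc x b ⊆ _)))
    refine setLIntegral_congr_fun measurableSet_Ioc fun u hu => ?_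
    rw [enorm_div_ofReal (hx.1.trans hu.1),
      show F u = ‖g u‖ₑ from indicator_of_mem (s := Ioc 0 b) ⟨hx.1.trans hu.1, hu.2⟩ _]
  have hF_sq : (fun u => F u ^ 2) = (Ioc 0 b).indicator fun u => ‖g u ^ 2‖ₑ := by
    ext u
    by_cases hu : u ∈ Ioc 0 b <;> simp [F, hu, enorm_pow]
  calc ∫⁻ x in Ioc 0 b, ‖(∫ u in x..b, g u / u) ^ 2‖ₑ
      ≤ ∫⁻ x in Ioi 0, (∫⁻ u in Ioi x, F u / ENNReal.ofReal u) ^ 2 := by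
        refine (setLIntegral_mono' measurableSet_Ioc fun x hx => ?_).trans
          (lintegral_mono_set Ioc_subset_Ioi_self)
        rw [enorm_pow]
        exact pow_le_pow_left' (hinner x hx) 2
    _ ≤ 4 * ∫⁻ u in Ioi 0, F u ^ 2 := lintegral_sq_setLIntegral_Ioi_div_le hF
    _ = 4 * ∫⁻ u in Ioc 0 b, ‖g u ^ 2‖ₑ := by
        rw [hF_sq, lintegral_indicator measurableSet_Ioc,
          Measure.restrict_restrict measurableSet_Ioc, Ioc_inter_Ioi, max_self]

theorem lstar_four_competitive_general
    (g : ℝ → ℝ) (hmeas : Measurable g)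
    (hsq : MeasureTheory.IntegrableOn (fun x => (g x)^2) (Set.Ioc (0:ℝ) 1)) :
    (∫ x in (0:ℝ)..1, (∫ u in x..1, g u / u)^2) ≤ 4 * ∫ x in (0:ℝ)..1, (g x)^2 := by
  rw [intervalIntegral.integral_of_le zero_le_one, intervalIntegral.integral_of_le zero_le_one]
  calc ∫ x in Ioc 0 1, (∫ u in x..1, g u / u) ^ 2
      ≤ (∫⁻ x in Ioc 0 1, ‖(∫ u in x..1, g u / u) ^ 2‖ₑ).toReal :=
        integral_le_toReal_lintegral_enorm _
    _ ≤ (4 * ∫⁻ u in Ioc 0 1, ‖g u ^ 2‖ₑ).toReal :=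
        ENNReal.toReal_mono (ENNReal.mul_ne_top (by norm_num) hsq.2.ne)
          (lintegral_Ioc_enorm_sq_intervalIntegral_div_le hmeas 1)
    _ = 4 * ∫ x in Ioc 0 1, g x ^ 2 := by
        rw [ENNReal.toReal_mul, ← integral_norm_eq_lintegral_enorm hsq.1]
        simp

theorem lstar_four_competitive
    (g : ℝ → ℝ) (hmeas : Measurable g)
    (hnn : ∀ x ∈ Set.Ioc (0:ℝ) 1, 0 ≤ g x)
    (hmono : AntitoneOn g (Set.Ioc (0:ℝ) 1))
    (hsq : MeasureTheory.IntegrableOn (fun x => (g x)^2) (Set.Ioc (0:ℝ) 1)) :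
    (∫ x in (0:ℝ)..1, (∫ u in x..1, g u / u)^2) ≤ 4 * ∫ x in (0:ℝ)..1, (g x)^2 :=
  lstar_four_competitive_general g hmeas hsq
end

section
/- Let g : (0,1] → ℝ be nonnegative, non-increasing, square-integrable, h(x) = ∫_x^1 g(u)/u du, and ε ∈ (0,1). Then ∫_ε^1 h(x)² dx ≤ 2 ∫_ε^1 h(y) g(y) dy. -/
/-!
Write `H x = ∫ u in x..1, g u / u`. On `[ε, 1]` the function `H` is absolutely continuous with
`H' = -g(x)/x` a.e. and `H 1 = 0`, so integrating `H²` by parts against `x - ε` gives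
`∫ H² = 2 ∫ (x - ε) (g x / x) H x`; since `0 ≤ (x - ε)/x ≤ 1` and `g, H ≥ 0`, this is at most
`2 ∫ H g`.
-/

open MeasureTheory Set

theorem integral_sq_integral_tail_eq {K : ℝ → ℝ} {a b : ℝ}
    (hK : IntervalIntegrable K volume a b) :
    ∫ x in a..b, (∫ u in x..b, K u) ^ 2 =
      2 * ∫ x in a..b, (x - a) * (K x * ∫ u in x..b, K u) := by
  set F : ℝ → ℝ := fun x => ∫ u in b..x, K u with hF
  have hFac : AbsolutelyContinuousOnInterval F a b :=
    hK.absolutelyContinuousOnInterval_intervalIntegral (by simp)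
  have hlin : AbsolutelyContinuousOnInterval (fun x : ℝ => x - a) a b :=
    (contDiff_id.sub contDiff_const).contDiffOn.absolutelyContinuousOnInterval
  have hderiv : ∀ᵐ x, x ∈ uIoc a b →
      (x - a) * deriv (fun y => F y * F y) x = -2 * ((x - a) * (K x * ∫ u in x..b, K u)) := by
    filter_upwards [hK.ae_hasDerivAt_integral] with x hx hxab
    have hFx : HasDerivAt F (K x) x := hx (uIoc_subset_uIcc hxab) b (by simp)
    rw [(hFx.fun_mul hFx).deriv, intervalIntegral.integral_symm b x]
    ring
  have hibp := hlin.integral_mul_deriv_eq_deriv_mul (hFac.fun_mul hFac)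
  rw [intervalIntegral.integral_congr_ae hderiv, intervalIntegral.integral_const_mul] at hibp
  have hsq : ∀ x, (∫ u in x..b, K u) ^ 2 = 1 * (F x * F x) := fun x => by
    rw [intervalIntegral.integral_symm b x]; ring
  simp only [hsq, sub_self, zero_mul, deriv_sub_const, deriv_id'', hF,
    intervalIntegral.integral_same, mul_zero, zero_sub] at hibp ⊢
  linarith

theorem integral_sq_integral_tail_div_le {g : ℝ → ℝ} {a b : ℝ} (ha : 0 < a) (hab : a ≤ b)
    (hg : IntervalIntegrable g volume a b) (hnn : ∀ x ∈ Icc a b, 0 ≤ g x) :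
    ∫ x in a..b, (∫ u in x..b, g u / u) ^ 2 ≤
      2 * ∫ y in a..b, (∫ u in y..b, g u / u) * g y := by
  have hK : IntervalIntegrable (fun u => g u / u) volume a b := by
    simpa only [div_eq_mul_inv] using hg.mul_continuousOn
      (continuousOn_inv₀.mono fun x hx => (ha.trans_le (uIcc_of_le hab ▸ hx).1).ne')
  have hH : ContinuousOn (fun x => ∫ u in x..b, g u / u) (uIcc a b) :=
    intervalIntegral.continuousOn_primitive_interval_left
      ((intervalIntegrable_iff' (μ := volume)).1 hK)
  have hHnn : ∀ x ∈ Icc a b, 0 ≤ ∫ u in x..b, g u / u := fun x hx =>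
    intervalIntegral.integral_nonneg hx.2 fun u hu =>
      div_nonneg (hnn u ⟨hx.1.trans hu.1, hu.2⟩) (ha.le.trans (hx.1.trans hu.1))
  rw [integral_sq_integral_tail_eq hK]
  gcongr
  refine intervalIntegral.integral_mono_on hab ?_ ?_ fun x hx => ?_
  · exact (hK.mul_continuousOn hH).continuousOn_mul (continuousOn_id.sub continuousOn_const)
  · exact hg.continuousOn_mul hH
  · have hx0 : 0 < x := ha.trans_le hx.1
    have hgx : 0 ≤ g x := hnn x hx
    have hweight : (x - a) * (g x / x) ≤ g x := by
      rw [mul_div_assoc', div_le_iff₀ hx0]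
      nlinarith
    calc (x - a) * (g x / x * ∫ u in x..b, g u / u)
        = (x - a) * (g x / x) * ∫ u in x..b, g u / u := by ring
      _ ≤ g x * ∫ u in x..b, g u / u := by gcongr; exact hHnn x hx
      _ = (∫ u in x..b, g u / u) * g x := mul_comm _ _

theorem lstar_intermediate_step_general
    (g : ℝ → ℝ)
    (hnn : ∀ x ∈ Set.Ioc (0:ℝ) 1, 0 ≤ g x)
    (hmono : AntitoneOn g (Set.Ioc (0:ℝ) 1))
    (ε : ℝ) (hε : ε ∈ Set.Ioo (0:ℝ) 1) :
    (∫ x in ε..1, (∫ u in x..1, g u / u)^2) ≤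
      2 * ∫ y in ε..1, (∫ u in y..1, g u / u) * g y := by
  obtain ⟨hε0, hε1⟩ := hε
  have hsub : Icc ε 1 ⊆ Ioc 0 1 := (Icc_subset_Ioc_iff hε1.le).2 ⟨hε0, le_rfl⟩
  have hg : IntervalIntegrable g volume ε 1 :=
    (hmono.mono (uIcc_of_le hε1.le ▸ hsub)).intervalIntegrable
  exact integral_sq_integral_tail_div_le hε0 hε1.le hg fun x hx => hnn x (hsub hx)

theorem lstar_intermediate_step
    (g : ℝ → ℝ) (hmeas : Measurable g)
    (hnn : ∀ x ∈ Set.Ioc (0:ℝ) 1, 0 ≤ g x)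
    (hmono : AntitoneOn g (Set.Ioc (0:ℝ) 1))
    (hsq : MeasureTheory.IntegrableOn (fun x => (g x)^2) (Set.Ioc (0:ℝ) 1))
    (ε : ℝ) (hε : ε ∈ Set.Ioo (0:ℝ) 1) :
    (∫ x in ε..1, (∫ u in x..1, g u / u)^2) ≤
      2 * ∫ y in ε..1, (∫ u in y..1, g u / u) * g y :=
  lstar_intermediate_step_general g hnn hmono ε hε
end

section
/- For p ∈ (0, 1/2), the ratio (∫_0^1 ((1/p)(u^{-p}−1))² du) / (∫_0^1 u^{-2p} du) equals 2/(1-p), which is strictly less than 4 and tends to 4 as p → 1/2 from below. -/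
/-! Both integrals are elementary: `∫₀¹ u^(-2p) du = 1/(1-2p)`, and expanding the square,
`∫₀¹ (u^(-p) - 1)² du = 1/(1-2p) - 2/(1-p) + 1 = 2p²/((1-2p)(1-p))`. The factor `1/p²` cancels
the `p²`, leaving the ratio `2/(1-p)`, which is continuous at `p = 1/2` with value `4`. -/

open Filter Topology intervalIntegral

namespace Real

theorem rpow_pow_two {x : ℝ} (hx : 0 ≤ x) (r : ℝ) : (x ^ r) ^ 2 = x ^ (2 * r) := by
  rw [← rpow_mul_natCast hx, mul_comm]
  norm_num

theorem integral_rpow_zero_one {r : ℝ} (hr : -1 < r) : ∫ x in (0:ℝ)..1, x ^ r = 1 / (r + 1) := by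
  rw [integral_rpow (Or.inl hr), one_rpow, zero_rpow (by linarith), sub_zero]

theorem integral_sq_rpow_neg {p : ℝ} (hp : p < 1 / 2) :
    ∫ x in (0:ℝ)..1, (x ^ (-p)) ^ 2 = 1 / (1 - 2 * p) := by
  have hsq : ∀ x ∈ Set.uIcc (0:ℝ) 1, (x ^ (-p)) ^ 2 = x ^ (2 * -p) := fun x hx =>
    rpow_pow_two (Set.uIcc_of_le (zero_le_one' ℝ) ▸ hx).1 (-p)
  rw [integral_congr hsq, integral_rpow_zero_one (by linarith)]
  ring_nf

theorem integral_sq_rpow_neg_sub_one {p : ℝ} (hp : p < 1 / 2) :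
    ∫ x in (0:ℝ)..1, (x ^ (-p) - 1) ^ 2 = 2 * p ^ 2 / ((1 - 2 * p) * (1 - p)) := by
  have hexpand : ∀ x ∈ Set.uIcc (0:ℝ) 1,
      (x ^ (-p) - 1) ^ 2 = x ^ (2 * -p) - 2 * x ^ (-p) + 1 := by
    intro x hx
    rw [← rpow_pow_two (Set.uIcc_of_le (zero_le_one' ℝ) ▸ hx).1]
    ring
  have hint_sq : IntervalIntegrable (fun x : ℝ => x ^ (2 * -p)) MeasureTheory.volume 0 1 :=
    intervalIntegrable_rpow' (by linarith)
  have hint : IntervalIntegrable (fun x : ℝ => 2 * x ^ (-p)) MeasureTheory.volume 0 1 :=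
    (intervalIntegrable_rpow' (by linarith)).const_mul 2
  rw [integral_congr hexpand, integral_add (hint_sq.sub hint) intervalIntegrable_const,
    integral_sub hint_sq hint, integral_const_mul, integral_rpow_zero_one (by linarith),
    integral_rpow_zero_one (by linarith), integral_const, show 2 * -p + 1 = 1 - 2 * p by ring, show -p + 1 = 1 - p by ring]
  have h1 : 1 - 2 * p ≠ 0 := by linarith
  have h2 : 1 - p ≠ 0 := by linarith
  field_simp
  ring

end Real

theorem lstar_ratio_eq {p : ℝ} (hp0 : p ≠ 0) (hp : p < 1 / 2) :
    (∫ u in (0:ℝ)..1, ((1 / p) * (u ^ (-p) - 1)) ^ 2) / ∫ u in (0:ℝ)..1, (u ^ (-p)) ^ 2 =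
      2 / (1 - p) := by
  simp_rw [mul_pow]
  rw [integral_const_mul, Real.integral_sq_rpow_neg_sub_one hp, Real.integral_sq_rpow_neg hp]
  have h1 : 1 - 2 * p ≠ 0 := by linarith
  have h2 : 1 - p ≠ 0 := by linarith
  rw [div_eq_div_iff (one_div_ne_zero h1) h2]
  field_simp

theorem lstar_ratio_tight :
    (∀ p ∈ Set.Ioo (0:ℝ) (1/2),
      (∫ u in (0:ℝ)..1, ((1/p) * ((u : ℝ) ^ (-p) - 1))^2) /
        (∫ u in (0:ℝ)..1, ((u : ℝ) ^ (-p))^2) = 2 / (1 - p) ∧ 2 / (1 - p) < 4) ∧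
    Filter.Tendsto
      (fun p : ℝ => (∫ u in (0:ℝ)..1, ((1/p) * ((u : ℝ) ^ (-p) - 1))^2) /
        (∫ u in (0:ℝ)..1, ((u : ℝ) ^ (-p))^2))
      (nhdsWithin (1/2) (Set.Iio (1/2))) (nhds 4) := by
  refine ⟨fun p ⟨hp0, hp⟩ => ⟨lstar_ratio_eq hp0.ne' hp, ?_⟩, ?_⟩
  · rw [div_lt_iff₀ (by linarith)]
    linarith
  · have hlim : Tendsto (fun p : ℝ => 2 / (1 - p)) (𝓝[<] (1 / 2)) (𝓝 4) := by
      have hcont : ContinuousAt (fun p : ℝ => 2 / (1 - p)) (1 / 2) :=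
        continuousAt_const.div (continuousAt_const.sub continuousAt_id) (by norm_num)
      convert hcont.tendsto.mono_left nhdsWithin_le_nhds using 2
      norm_num
    refine hlim.congr' ?_
    filter_upwards [Ioo_mem_nhdsLT (show (0:ℝ) < 1 / 2 by norm_num)] with p hp
    exact (lstar_ratio_eq hp.1.ne' hp.2).symm
end

section
/- Let L : (0,1] → ℝ be monotone non-increasing with L(1)=0, and define F(ρ) = L(ρ) + ∫_ρ^1 (L(ρ) − L(x))/x² dx. Then F is monotone non-increasing on (0,1]. -/
open MeasureTheory Set

theorem lstar_is_monotone
    (L : ℝ → ℝ)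
    (hmono : AntitoneOn L (Set.Ioc (0:ℝ) 1))
    (hL1 : L 1 = 0) :
    AntitoneOn (fun ρ => L ρ + ∫ x in ρ..1, (L ρ - L x) / x^2) (Set.Ioc (0:ℝ) 1) := by
  -- helper facts
  have hsub : ∀ c d : ℝ, c ∈ Set.Ioc (0:ℝ) 1 → d ∈ Set.Ioc (0:ℝ) 1 →
      Set.uIcc c d ⊆ Set.Ioc (0:ℝ) 1 := by
    intro c d hc hd x hx
    rw [Set.mem_uIcc] at hx
    rcases hx with h | h
    · exact ⟨lt_of_lt_of_le hc.1 h.1, le_trans h.2 hd.2⟩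
    · exact ⟨lt_of_lt_of_le hd.1 h.1, le_trans h.2 hc.2⟩
  have hcont : ∀ c d : ℝ, c ∈ Set.Ioc (0:ℝ) 1 → d ∈ Set.Ioc (0:ℝ) 1 →
      ContinuousOn (fun x : ℝ => (x^2)⁻¹) (Set.uIcc c d) := by
    intro c d hc hd
    refine ((continuous_pow 2).continuousOn).inv₀ ?_
    intro x hx
    have := (hsub c d hc hd hx).1
    positivity
  have hgI : ∀ c d : ℝ, c ∈ Set.Ioc (0:ℝ) 1 → d ∈ Set.Ioc (0:ℝ) 1 →
      IntervalIntegrable (fun x => L x / x^2) volume c d := by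
    intro c d hc hd
    have hLI : IntervalIntegrable L volume c d :=
      (hmono.mono (hsub c d hc hd)).intervalIntegrable
    have := hLI.mul_continuousOn (hcont c d hc hd)
    simpa [div_eq_mul_inv] using this
  have hcI : ∀ (r : ℝ) (c d : ℝ), c ∈ Set.Ioc (0:ℝ) 1 → d ∈ Set.Ioc (0:ℝ) 1 →
      IntervalIntegrable (fun x => r / x^2) volume c d := by
    intro r c d hc hd
    have : ContinuousOn (fun x : ℝ => r / x^2) (Set.uIcc c d) :=
      continuousOn_const.div ((continuous_pow 2).continuousOn)
        (fun x hx => by have := (hsub c d hc hd hx).1; positivity)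
    exact this.intervalIntegrable
  have hval : ∀ (r : ℝ) (c d : ℝ), c ∈ Set.Ioc (0:ℝ) 1 → d ∈ Set.Ioc (0:ℝ) 1 →
      (∫ x in c..d, r / x^2) = r * (c⁻¹ - d⁻¹) := by
    intro r c d hc hd
    have h0 : (0:ℝ) ∉ Set.uIcc c d := fun h => lt_irrefl 0 (hsub c d hc hd h).1
    have hz : (∫ x in c..d, (x:ℝ) ^ (-2 : ℤ)) =
        (d ^ (-2 + 1 : ℤ) - c ^ (-2 + 1 : ℤ)) / ((-2 : ℤ) + 1) :=
      integral_zpow (Or.inr ⟨by norm_num, h0⟩)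
    have : (∫ x in c..d, r / x^2) = r * ∫ x in c..d, (x:ℝ) ^ (-2 : ℤ) := by
      rw [← intervalIntegral.integral_const_mul]
      apply intervalIntegral.integral_congr
      intro x hx
      have hx0 : x ≠ 0 := fun h => h0 (h ▸ hx)
      show r / x ^ 2 = r * x ^ (-2 : ℤ)
      rw [div_eq_mul_inv, zpow_neg, ← zpow_natCast x 2]
      norm_num
    rw [this, hz]
    have hc0 : c ≠ 0 := ne_of_gt hc.1
    have hd0 : d ≠ 0 := ne_of_gt hd.1
    simp only [show (-2 + 1 : ℤ) = -1 from by norm_num, zpow_neg, zpow_one]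
    push_cast
    ring
  -- rewrite F
  have key : ∀ ρ ∈ Set.Ioc (0:ℝ) 1,
      (L ρ + ∫ x in ρ..1, (L ρ - L x) / x^2) = L ρ * ρ⁻¹ - ∫ x in ρ..1, L x / x^2 := by
    intro ρ hρ
    have h1 : (1:ℝ) ∈ Set.Ioc (0:ℝ) 1 := by norm_num
    have hs : (∫ x in ρ..1, (L ρ - L x) / x^2)
        = (∫ x in ρ..1, L ρ / x^2) - ∫ x in ρ..1, L x / x^2 := by
      rw [← intervalIntegral.integral_sub (hcI (L ρ) ρ 1 hρ h1) (hgI ρ 1 hρ h1)]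
      apply intervalIntegral.integral_congr
      intro x hx
      ring
    rw [hs, hval (L ρ) ρ 1 hρ h1]
    ring
  intro a ha b hb hab
  simp only
  rw [key a ha, key b hb]
  have hb1 : (1:ℝ) ∈ Set.Ioc (0:ℝ) 1 := by norm_num
  have hadd : (∫ x in a..b, L x / x^2) + (∫ x in b..1, L x / x^2)
      = ∫ x in a..1, L x / x^2 :=
    intervalIntegral.integral_add_adjacent_intervals (hgI a b ha hb) (hgI b 1 hb hb1)
  have hLab : L b ≤ L a := hmono ha hb hab
  have hbnd : (∫ x in a..b, L x / x^2) ≤ ∫ x in a..b, L a / x^2 := by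
    apply intervalIntegral.integral_mono_on hab (hgI a b ha hb) (hcI (L a) a b ha hb)
    intro x hx
    have hx0 : 0 < x := lt_of_lt_of_le ha.1 hx.1
    have hLx : L x ≤ L a := hmono ha ⟨hx0, le_trans hx.2 hb.2⟩ hx.1
    gcongr
  rw [hval (L a) a b ha hb] at hbnd
  have hP : 0 ≤ (L a - L b) * b⁻¹ :=
    mul_nonneg (sub_nonneg.2 hLab) (inv_pos.2 hb.1).le
  nlinarith [hP, hbnd, hadd]
end

section
/- Let L : (0,1] → ℝ be monotone non-increasing with L(1) = 0, L bounded, and lim_{u→0+} L(u) = c. Define F(ρ) = L(ρ)/ρ − ∫_ρ^1 L(u)/u² du. Then lim_{ρ→0+} ∫_ρ^1 F(u) du = c, i.e., the L* estimator is unbiased. -/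
/-!
Write `G ρ = ∫ x in ρ..1, L x / x ^ 2`. Wherever `L` is continuous, i.e. off a countable set,
`L u / u - G u` is the derivative of `u ↦ -u * G u`, so `∫ u in ρ..1, F u = ρ * G ρ`.
Bounding `L` on `[ρ, d]` and `[d, 1]` by its values at the endpoints squeezes `ρ * G ρ` between
`L d * (1 - ρ / d) + O(ρ)` and `L ρ * (1 - ρ)`; letting `ρ → 0` and then `d → 0` gives the
limit `c`.
-/

open MeasureTheory Set Filter Topology intervalIntegral

section

variable {f : ℝ → ℝ} {a b : ℝ}

lemma IntervalIntegrable.div_pow (hf : IntervalIntegrable f volume a b) (ha : 0 < a)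
    (hab : a ≤ b) (n : ℕ) : IntervalIntegrable (fun x => f x / x ^ n) volume a b := by
  have hpow : ContinuousOn (fun x : ℝ => (x ^ n)⁻¹) (uIcc a b) :=
    (continuousOn_pow n).inv₀ fun x hx => pow_ne_zero n (ha.trans_le (uIcc_of_le hab ▸ hx).1).ne'
  simpa only [div_eq_mul_inv] using hf.mul_continuousOn hpow

lemma AntitoneOn.intervalIntegrable_of_le (hf : AntitoneOn f (Icc a b)) (hab : a ≤ b) :
    IntervalIntegrable f volume a b :=
  (uIcc_of_le hab ▸ hf).intervalIntegrable

lemma integral_const_div_sq (k : ℝ) (ha : 0 < a) (hab : a ≤ b) :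
    ∫ x in a..b, k / x ^ 2 = k * (a⁻¹ - b⁻¹) := by
  have hderiv : ∀ x ∈ uIcc a b, HasDerivAt (fun y => -(k * y⁻¹)) (k / x ^ 2) x := by
    intro x hx
    have hx0 : x ≠ 0 := (ha.trans_le (uIcc_of_le hab ▸ hx).1).ne'
    simpa [div_eq_mul_inv] using ((hasDerivAt_inv hx0).const_mul k).fun_neg
  rw [integral_eq_sub_of_hasDerivAt hderiv (intervalIntegrable_const.div_pow ha hab 2)]
  ring

lemma AntitoneOn.le_integral_div_sq (hf : AntitoneOn f (Icc a b)) (ha : 0 < a) (hab : a ≤ b) :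
    f b * (a⁻¹ - b⁻¹) ≤ ∫ x in a..b, f x / x ^ 2 := by
  rw [← integral_const_div_sq _ ha hab]
  refine integral_mono_on hab (intervalIntegrable_const.div_pow ha hab 2)
    ((hf.intervalIntegrable_of_le hab).div_pow ha hab 2) fun x hx => ?_
  exact div_le_div_of_nonneg_right (hf hx ⟨hab, le_rfl⟩ hx.2) (sq_nonneg x)

lemma AntitoneOn.integral_div_sq_le (hf : AntitoneOn f (Icc a b)) (ha : 0 < a) (hab : a ≤ b) :
    ∫ x in a..b, f x / x ^ 2 ≤ f a * (a⁻¹ - b⁻¹) := by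
  rw [← integral_const_div_sq _ ha hab]
  refine integral_mono_on hab ((hf.intervalIntegrable_of_le hab).div_pow ha hab 2)
    (intervalIntegrable_const.div_pow ha hab 2) fun x hx => ?_
  exact div_le_div_of_nonneg_right (hf ⟨le_rfl, hab⟩ hx hx.1) (sq_nonneg x)

lemma AntitoneOn.integral_div_sub_integral_div_sq (hf : AntitoneOn f (Icc a b)) (ha : 0 < a)
    (hab : a ≤ b) :
    ∫ u in a..b, (f u / u - ∫ x in u..b, f x / x ^ 2) = a * ∫ x in a..b, f x / x ^ 2 := by
  set G : ℝ → ℝ := fun t => ∫ x in t..b, f x / x ^ 2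
  have hint : IntervalIntegrable (fun x => f x / x ^ 2) volume a b :=
    (hf.intervalIntegrable_of_le hab).div_pow ha hab 2
  have hG : ContinuousOn G (Icc a b) := by
    have := continuousOn_primitive_interval_left
      (uIcc_of_le hab ▸ (intervalIntegrable_iff_integrableOn_Icc_of_le hab).1 hint)
    rwa [uIcc_of_le hab] at this
  have hderiv : ∀ t ∈ Ioo a b \ {x ∈ Icc a b | ¬ContinuousWithinAt f (Icc a b) x},
      HasDerivAt (fun t => -(t * G t)) (f t / t - G t) t := by
    rintro t ⟨ht, hcont⟩
    have ht0 : t ≠ 0 := (ha.trans ht.1).ne'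
    have hft : ContinuousAt f t :=
      (not_not.1 fun h => hcont ⟨Ioo_subset_Icc_self ht, h⟩).continuousAt (Icc_mem_nhds ht.1 ht.2)
    have hmeas : StronglyMeasurableAtFilter (fun x => f x / x ^ 2) (𝓝 t) :=
      AEStronglyMeasurable.stronglyMeasurableAtFilter_of_mem
        (hint.1.mono_set Ioo_subset_Ioc_self).aestronglyMeasurable (Ioo_mem_nhds ht.1 ht.2)
    have hG' : HasDerivAt G (-(f t / t ^ 2)) t :=
      integral_hasDerivAt_left
        (hint.mono_set (uIcc_subset_uIcc_right (Icc_subset_uIcc (Ioo_subset_Icc_self ht)))) hmeas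
        (hft.div (continuous_pow 2).continuousAt (pow_ne_zero 2 ht0))
    refine ((hasDerivAt_id' t).fun_mul hG').fun_neg.congr_deriv ?_
    rw [mul_neg, ← mul_div_assoc, pow_two, mul_div_mul_left _ _ ht0]
    ring
  rw [integral_eq_of_hasDerivAt_off_countable_of_le _ _ hab
    hf.countable_not_continuousWithinAt (continuousOn_id.mul hG).neg hderiv]
  · simp [G]
  · simpa using ((hf.intervalIntegrable_of_le hab).div_pow ha hab 1).sub
      (hG.intervalIntegrable_of_Icc hab)

lemma AntitoneOn.mul_integral_div_sq_le (hf : AntitoneOn f (Ioc 0 1)) {ρ : ℝ} (hρ : 0 < ρ)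
    (hρ1 : ρ ≤ 1) : ρ * ∫ x in ρ..1, f x / x ^ 2 ≤ f ρ * (1 - ρ) :=
  calc ρ * ∫ x in ρ..1, f x / x ^ 2
      ≤ ρ * (f ρ * (ρ⁻¹ - 1⁻¹)) := mul_le_mul_of_nonneg_left
        ((hf.mono (Icc_subset_Ioc hρ le_rfl)).integral_div_sq_le hρ hρ1) hρ.le
    _ = f ρ * (1 - ρ) := by field_simp [hρ.ne']

lemma AntitoneOn.le_mul_integral_div_sq (hf : AntitoneOn f (Ioc 0 1)) {ρ d : ℝ} (hρ : 0 < ρ)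
    (hρd : ρ ≤ d) (hd1 : d ≤ 1) :
    f d * (1 - ρ / d) + ρ * (f 1 * (d⁻¹ - 1)) ≤ ρ * ∫ x in ρ..1, f x / x ^ 2 := by
  have hd : 0 < d := hρ.trans_le hρd
  have hfρd : AntitoneOn f (Icc ρ d) := hf.mono (Icc_subset_Ioc hρ hd1)
  have hfd1 : AntitoneOn f (Icc d 1) := hf.mono (Icc_subset_Ioc hd le_rfl)
  rw [← integral_add_adjacent_intervals ((hfρd.intervalIntegrable_of_le hρd).div_pow hρ hρd 2)
    ((hfd1.intervalIntegrable_of_le hd1).div_pow hd hd1 2)]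
  calc f d * (1 - ρ / d) + ρ * (f 1 * (d⁻¹ - 1))
      = ρ * (f d * (ρ⁻¹ - d⁻¹) + f 1 * (d⁻¹ - 1⁻¹)) := by field_simp [hρ.ne']
    _ ≤ _ := mul_le_mul_of_nonneg_left (add_le_add (hfρd.le_integral_div_sq hρ hρd)
        (hfd1.le_integral_div_sq hd hd1)) hρ.le

lemma AntitoneOn.tendsto_mul_integral_div_sq {c : ℝ} (hf : AntitoneOn f (Ioc 0 1))
    (hlim : Tendsto f (𝓝[>] 0) (𝓝 c)) :
    Tendsto (fun ρ => ρ * ∫ x in ρ..1, f x / x ^ 2) (𝓝[>] 0) (𝓝 c) := by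
  refine tendsto_order.2 ⟨fun m hm => ?_, fun M hM => ?_⟩
  · obtain ⟨d, hfd, hd⟩ :=
      ((hlim.eventually (lt_mem_nhds hm)).and (Ioo_mem_nhdsGT one_pos)).exists
    have hlower : Tendsto (fun ρ => f d * (1 - ρ / d) + ρ * (f 1 * (d⁻¹ - 1))) (𝓝[>] 0)
        (𝓝 (f d)) :=
      tendsto_nhdsWithin_of_tendsto_nhds <| (by fun_prop : Continuous fun ρ : ℝ =>
        f d * (1 - ρ / d) + ρ * (f 1 * (d⁻¹ - 1))).tendsto' 0 _ (by simp)
    filter_upwards [hlower.eventually (lt_mem_nhds hfd), Ioo_mem_nhdsGT hd.1] with ρ hρm hρ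
    exact hρm.trans_le (hf.le_mul_integral_div_sq hρ.1 hρ.2.le hd.2.le)
  · have hupper : Tendsto (fun ρ => f ρ * (1 - ρ)) (𝓝[>] 0) (𝓝 c) := by
      simpa using hlim.mul <| tendsto_nhdsWithin_of_tendsto_nhds <|
        (by fun_prop : Continuous fun ρ : ℝ => 1 - ρ).tendsto' 0 1 (by simp)
    filter_upwards [hupper.eventually (gt_mem_nhds hM), Ioo_mem_nhdsGT one_pos] with ρ hρM hρ
    exact (hf.mul_integral_div_sq_le hρ.1 hρ.2.le).trans_lt hρM

end

theorem lstar_unbiased_general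
    (L : ℝ → ℝ) (c : ℝ)
    (hmono : AntitoneOn L (Set.Ioc (0:ℝ) 1))
    (hlim : Filter.Tendsto L (nhdsWithin 0 (Set.Ioi 0)) (nhds c)) :
    Filter.Tendsto (fun ρ => ∫ u in ρ..1, (L u / u - ∫ x in u..1, L x / x^2))
      (nhdsWithin 0 (Set.Ioi 0)) (nhds c) := by
  refine hmono.tendsto_mul_integral_div_sq hlim |>.congr' ?_
  filter_upwards [Ioo_mem_nhdsGT one_pos] with ρ hρ
  exact ((hmono.mono (Icc_subset_Ioc hρ.1 le_rfl)).integral_div_sub_integral_div_sq hρ.1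
    hρ.2.le).symm

theorem lstar_unbiased
    (L : ℝ → ℝ) (c : ℝ)
    (hmono : AntitoneOn L (Set.Ioc (0:ℝ) 1))
    (hL1 : L 1 = 0)
    (hbdd : ∃ M : ℝ, ∀ u ∈ Set.Ioc (0:ℝ) 1, |L u| ≤ M)
    (hlim : Filter.Tendsto L (nhdsWithin 0 (Set.Ioi 0)) (nhds c)) :
    Filter.Tendsto (fun ρ => ∫ u in ρ..1, (L u / u - ∫ x in u..1, L x / x^2))
      (nhdsWithin 0 (Set.Ioi 0)) (nhds c) :=
  lstar_unbiased_general L c hmono hlim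
end

section
/- Let ĥ : (0,1] → ℝ be a nonnegative measurable function, L : (0,1] → ℝ non-increasing, and suppose for all ρ ∈ (0,1]: ρ·ĥ(ρ) + ∫_ρ^1 ĥ(u) du ≤ L(ρ) (monotone estimator constraint). If F is the function satisfying ρ·F(ρ) + ∫_ρ^1 F(u) du = L(ρ) with equality (the L* estimator), then for all ρ ∈ (0,1]: ∫_ρ^1 ĥ(u) du ≤ ∫_ρ^1 F(u) du. -/
open MeasureTheory Set
set_option maxHeartbeats 1000000

theorem lstar_dominates_monotone
    (h F L : ℝ → ℝ)
    (hmeas : Measurable h)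
    (hnn : ∀ u ∈ Set.Ioc (0:ℝ) 1, 0 ≤ h u)
    (hint : MeasureTheory.IntegrableOn h (Set.Ioc (0:ℝ) 1))
    (hFint : MeasureTheory.IntegrableOn F (Set.Ioc (0:ℝ) 1))
    (hmono : AntitoneOn L (Set.Ioc (0:ℝ) 1))
    (hconstr : ∀ ρ ∈ Set.Ioc (0:ℝ) 1, ρ * h ρ + (∫ u in ρ..1, h u) ≤ L ρ)
    (hF : ∀ ρ ∈ Set.Ioc (0:ℝ) 1, ρ * F ρ + (∫ u in ρ..1, F u) = L ρ) :
    ∀ ρ ∈ Set.Ioc (0:ℝ) 1, (∫ u in ρ..1, h u) ≤ ∫ u in ρ..1, F u := by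
  intro ρ hρ
  obtain ⟨hρ0, hρ1⟩ := hρ
  set g : ℝ → ℝ := fun u => h u - F u with hgdef
  set D : ℝ → ℝ := fun u => ∫ t in u..1, g t with hDdef
  -- interval integrability facts
  have hiih : ∀ u ∈ Set.Ioc (0:ℝ) 1, IntervalIntegrable h volume u 1 := by
    intro u hu
    rw [intervalIntegrable_iff_integrableOn_Ioc_of_le hu.2]
    exact hint.mono_set (Ioc_subset_Ioc_left hu.1.le)
  have hiiF : ∀ u ∈ Set.Ioc (0:ℝ) 1, IntervalIntegrable F volume u 1 := by
    intro u hu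
    rw [intervalIntegrable_iff_integrableOn_Ioc_of_le hu.2]
    exact hFint.mono_set (Ioc_subset_Ioc_left hu.1.le)
  have hDeq : ∀ u ∈ Set.Ioc (0:ℝ) 1,
      D u = (∫ t in u..1, h t) - ∫ t in u..1, F t := by
    intro u hu
    exact intervalIntegral.integral_sub (hiih u hu) (hiiF u hu)
  -- key pointwise inequality : u * g u + D u ≤ 0
  have hkey : ∀ u ∈ Set.Ioc (0:ℝ) 1, u * g u + D u ≤ 0 := by
    intro u hu
    have h1 := hconstr u hu
    have h2 := hF u hu
    have h3 := hDeq u hu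
    simp only [hgdef] at h3 ⊢
    nlinarith [h1, h2, h3]
  -- integrability of g on Ioc ρ 1 and Icc ρ 1
  have hsub : Set.Ioc ρ 1 ⊆ Set.Ioc (0:ℝ) 1 := Ioc_subset_Ioc_left hρ0.le
  have hgi : IntegrableOn g (Set.Ioc ρ 1) :=
    (hint.mono_set hsub).sub (hFint.mono_set hsub)
  have hgiIcc : IntegrableOn g (Set.Icc ρ 1) := by
    rw [integrableOn_Icc_iff_integrableOn_Ioc]; exact hgi
  have huIcc : Set.uIcc ρ (1:ℝ) = Set.Icc ρ 1 := uIcc_of_le hρ1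
  have hDcont : ContinuousOn D (Set.Icc ρ 1) := by
    rw [← huIcc]
    exact intervalIntegral.continuousOn_primitive_interval_left (by rw [huIcc]; exact hgiIcc)
  have hc2 : ContinuousOn (fun u : ℝ => ((u : ℝ) ^ 2)⁻¹) (Set.Icc ρ 1) := by
    apply ContinuousOn.inv₀ (by fun_prop)
    intro x hx
    have hx0 : 0 < x := lt_of_lt_of_le hρ0 hx.1
    positivity
  have hc1 : ContinuousOn (fun u : ℝ => (u : ℝ)⁻¹) (Set.Icc ρ 1) := by
    apply ContinuousOn.inv₀ continuousOn_id
    intro x hx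
    exact (lt_of_lt_of_le hρ0 hx.1).ne'
  -- integrability of D * (·^2)⁻¹ on Ioc ρ 1
  have hDI : IntegrableOn (fun u => D u * (u ^ 2)⁻¹) (Set.Ioc ρ 1) := by
    have hcm : ContinuousOn (fun u : ℝ => D u * ((u:ℝ) ^ 2)⁻¹) (Set.Icc ρ 1) := hDcont.mul hc2
    have : IntegrableOn (fun u : ℝ => D u * ((u:ℝ) ^ 2)⁻¹) (Set.Icc ρ 1) volume :=
      hcm.integrableOn_Icc
    exact this.mono_set Ioc_subset_Icc_self
  -- integrability of g * (·)⁻¹ on Ioc ρ 1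
  have hginv : IntegrableOn (fun u => g u * u⁻¹) (Set.Ioc ρ 1) := by
    have h0 : IntegrableOn (fun u : ℝ => u⁻¹ * g u) (Set.Ioc ρ 1) := by
      apply Integrable.bdd_mul (c := ρ⁻¹) hgi
      · exact ((hc1.mono Ioc_subset_Icc_self).aestronglyMeasurable measurableSet_Ioc)
      · filter_upwards [ae_restrict_mem measurableSet_Ioc] with x hx
        rw [Real.norm_eq_abs, abs_inv, abs_of_pos (lt_trans hρ0 hx.1)]
        exact inv_anti₀ hρ0 hx.1.le
    exact h0.congr (by filter_upwards with x using mul_comm _ _)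
  -- the Fubini identity: ∫ D u * (u^2)⁻¹ = ∫ g t * (ρ⁻¹ - t⁻¹)
  have hfub : (∫ u in Set.Ioc ρ 1, D u * (u ^ 2)⁻¹)
      = ∫ t in Set.Ioc ρ 1, g t * (ρ⁻¹ - t⁻¹) := by
    set k : ℝ → ℝ → ℝ := fun u t =>
      ({q : ℝ × ℝ | q.1 < q.2}).indicator (fun q => g q.2 * ((q.1 : ℝ) ^ 2)⁻¹) (u, t) with hkdef
    have hkint : Integrable (Function.uncurry k)
        ((volume.restrict (Set.Ioc ρ 1)).prod (volume.restrict (Set.Ioc ρ 1))) := by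
      have h2 : Integrable (fun u : ℝ => ((u : ℝ) ^ 2)⁻¹) (volume.restrict (Set.Ioc ρ 1)) :=
        (hc2.integrableOn_Icc).mono_set Ioc_subset_Icc_self
      have hbase := Integrable.mul_prod h2 hgi
      have hbase' : Integrable (fun q : ℝ × ℝ => g q.2 * ((q.1 : ℝ) ^ 2)⁻¹)
          ((volume.restrict (Set.Ioc ρ 1)).prod (volume.restrict (Set.Ioc ρ 1))) :=
        hbase.congr (by filter_upwards with q using mul_comm _ _)
      exact hbase'.indicator (measurableSet_lt measurable_fst measurable_snd)
    have hswap := MeasureTheory.integral_integral_swap hkint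
    have hL : (∫ u in Set.Ioc ρ 1, ∫ t in Set.Ioc ρ 1, k u t)
        = ∫ u in Set.Ioc ρ 1, D u * (u ^ 2)⁻¹ := by
      apply setIntegral_congr_fun measurableSet_Ioc
      intro u hu
      show (∫ t in Set.Ioc ρ 1, k u t) = D u * (u ^ 2)⁻¹
      have h1 : (∫ t in Set.Ioc ρ 1, k u t)
          = ∫ t in Set.Ioc ρ 1, (Set.Ioc u 1).indicator g t * ((u:ℝ) ^ 2)⁻¹ := by
        apply setIntegral_congr_fun measurableSet_Ioc
        intro t ht
        show k u t = (Set.Ioc u 1).indicator g t * ((u:ℝ) ^ 2)⁻¹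
        simp only [hkdef, Set.indicator_apply, Set.mem_setOf_eq, Set.mem_Ioc]
        by_cases hut : u < t
        · simp [hut, ht.2]
        · simp [hut]
      rw [h1, integral_mul_const, setIntegral_indicator measurableSet_Ioc]
      have hset : Set.Ioc ρ 1 ∩ Set.Ioc u 1 = Set.Ioc u 1 :=
        inter_eq_self_of_subset_right (Ioc_subset_Ioc_left hu.1.le)
      rw [hset, show D u = ∫ t in Set.Ioc u 1, g t from intervalIntegral.integral_of_le hu.2]
    have hR : (∫ t in Set.Ioc ρ 1, ∫ u in Set.Ioc ρ 1, k u t)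
        = ∫ t in Set.Ioc ρ 1, g t * (ρ⁻¹ - t⁻¹) := by
      apply setIntegral_congr_fun measurableSet_Ioc
      intro t ht
      show (∫ u in Set.Ioc ρ 1, k u t) = g t * (ρ⁻¹ - t⁻¹)
      have h1 : (∫ u in Set.Ioc ρ 1, k u t)
          = ∫ u in Set.Ioc ρ 1, (Set.Iio t).indicator (fun u => g t * ((u:ℝ) ^ 2)⁻¹) u := by
        apply setIntegral_congr_fun measurableSet_Ioc
        intro u hu
        show k u t = (Set.Iio t).indicator (fun u => g t * ((u:ℝ) ^ 2)⁻¹) u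
        simp only [hkdef, Set.indicator_apply, Set.mem_setOf_eq, Set.mem_Iio]
      rw [h1, setIntegral_indicator measurableSet_Iio]
      have hset : Set.Ioc ρ 1 ∩ Set.Iio t = Set.Ioo ρ t := by
        ext u
        simp only [Set.mem_inter_iff, Set.mem_Ioc, Set.mem_Iio, Set.mem_Ioo]
        constructor
        · rintro ⟨⟨a, b⟩, c⟩; exact ⟨a, c⟩
        · rintro ⟨a, b⟩; exact ⟨⟨a, le_trans b.le ht.2⟩, b⟩
      rw [hset, ← MeasureTheory.integral_Ioc_eq_integral_Ioo,
        ← intervalIntegral.integral_of_le (le_of_lt ht.1),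
        intervalIntegral.integral_const_mul]
      have hzpow : (∫ u in ρ..t, ((u:ℝ) ^ 2)⁻¹) = ρ⁻¹ - t⁻¹ := by
        have h0 : (0:ℝ) ∉ Set.uIcc ρ t := by
          rw [uIcc_of_le ht.1.le]
          intro hc
          exact absurd hc.1 (not_le.mpr hρ0)
        have hz := integral_zpow (a := ρ) (b := t) (n := -2) (Or.inr ⟨by norm_num, h0⟩)
        have hconv : (fun u : ℝ => ((u:ℝ) ^ 2)⁻¹) = fun u : ℝ => (u:ℝ) ^ (-2 : ℤ) := by
          funext x; rw [zpow_neg]; norm_cast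
        rw [hconv, hz]
        norm_num
        ring
      rw [hzpow]
    rw [← hL, hswap]
    exact hR
  -- now combine
  have hsum : (∫ u in Set.Ioc ρ 1, (g u * u⁻¹ + D u * (u ^ 2)⁻¹))
      = (D ρ) * ρ⁻¹ := by
    rw [integral_add hginv hDI, hfub, ← integral_add hginv]
    · have : ∀ u ∈ Set.Ioc ρ 1, g u * u⁻¹ + g u * (ρ⁻¹ - u⁻¹) = g u * ρ⁻¹ := by
        intro u hu; ring
      rw [setIntegral_congr_fun measurableSet_Ioc this, integral_mul_const, hDdef]
      simp only
      rw [intervalIntegral.integral_of_le hρ1]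
    · have hI : IntegrableOn (fun t => g t * ρ⁻¹ - g t * t⁻¹) (Set.Ioc ρ 1) :=
        (hgi.mul_const _).sub hginv
      exact hI.congr (by filter_upwards with t using by ring)
  have hnonpos : (∫ u in Set.Ioc ρ 1, (g u * u⁻¹ + D u * (u ^ 2)⁻¹)) ≤ 0 := by
    apply setIntegral_nonpos measurableSet_Ioc
    intro u hu
    have hu0 : 0 < u := lt_trans hρ0 hu.1
    have := hkey u ⟨hu0, hu.2⟩
    have hquot : g u * u⁻¹ + D u * (u ^ 2)⁻¹ = (u * g u + D u) * (u^2)⁻¹ := by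
      field_simp
    rw [hquot]
    apply mul_nonpos_of_nonpos_of_nonneg this
    positivity
  have hDρ : D ρ ≤ 0 := by
    have := hsum ▸ hnonpos
    by_contra hc
    push_neg at hc
    nlinarith [inv_pos.mpr hρ0]
  have := hDeq ρ ⟨hρ0, hρ1⟩
  linarith [this ▸ hDρ]
end

section
/- Let ĥ : (0,1] → ℝ be a nonnegative integrable function and L : (0,1] → ℝ non-increasing with lim_{u→0+} L(u) = c. Suppose for all ρ ∈ (0,1]: ∫_ρ^1 ĥ(u) du ≤ L(ρ), and for all ρ: ĥ(ρ) ≥ (L(ρ) − ∫_ρ^1 ĥ(u) du)/ρ. Then lim_{ρ→0+} ∫_ρ^1 ĥ(u) du = c. -/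
open MeasureTheory Set Filter

theorem inrange_implies_unbiased
    (h L : ℝ → ℝ) (c : ℝ)
    (hnn : ∀ u ∈ Set.Ioc (0:ℝ) 1, 0 ≤ h u)
    (hint : MeasureTheory.IntegrableOn h (Set.Ioc (0:ℝ) 1))
    (hmono : AntitoneOn L (Set.Ioc (0:ℝ) 1))
    (hlim : Filter.Tendsto L (nhdsWithin 0 (Set.Ioi 0)) (nhds c))
    (hub : ∀ ρ ∈ Set.Ioc (0:ℝ) 1, (∫ u in ρ..1, h u) ≤ L ρ)
    (hlb : ∀ ρ ∈ Set.Ioc (0:ℝ) 1, (L ρ - ∫ u in ρ..1, h u) / ρ ≤ h ρ) :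
    Filter.Tendsto (fun ρ => ∫ u in ρ..1, h u) (nhdsWithin 0 (Set.Ioi 0)) (nhds c) := by
  set I : ℝ → ℝ := fun ρ => ∫ u in ρ..1, h u with hI
  -- L ρ ≤ c on Ioc 0 1
  have hLle : ∀ ρ ∈ Set.Ioc (0:ℝ) 1, L ρ ≤ c := by
    intro ρ hρ
    refine ge_of_tendsto hlim ?_
    filter_upwards [Ioo_mem_nhdsGT_of_mem ⟨le_refl (0:ℝ), hρ.1⟩] with x hx
    exact hmono ⟨hx.1, hx.2.le.trans hρ.2⟩ hρ hx.2.le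
  have hIle : ∀ ρ ∈ Set.Ioc (0:ℝ) 1, I ρ ≤ c := fun ρ hρ => (hub ρ hρ).trans (hLle ρ hρ)
  -- interval integrability
  have hii : ∀ ρ ∈ Set.Ioc (0:ℝ) 1, IntervalIntegrable h volume ρ 1 := by
    intro ρ hρ
    rw [intervalIntegrable_iff_integrableOn_Ioc_of_le hρ.2]
    exact hint.mono_set (Set.Ioc_subset_Ioc hρ.1.le le_rfl)
  -- I antitone on Ioc 0 1
  have hIanti : ∀ ρ₁ ∈ Set.Ioc (0:ℝ) 1, ∀ ρ₂ ∈ Set.Ioc (0:ℝ) 1, ρ₁ ≤ ρ₂ → I ρ₂ ≤ I ρ₁ := by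
    intro ρ₁ h₁ ρ₂ h₂ hle
    have key : I ρ₁ = (∫ u in ρ₁..ρ₂, h u) + I ρ₂ := by
      rw [hI]
      have hsub : Set.uIcc ρ₁ ρ₂ ⊆ Set.uIcc ρ₁ 1 := by
        rw [Set.uIcc_of_le hle, Set.uIcc_of_le h₁.2]
        exact Set.Icc_subset_Icc le_rfl h₂.2
      exact (intervalIntegral.integral_add_adjacent_intervals
        ((hii ρ₁ h₁).mono_set hsub) (hii ρ₂ h₂)).symm
    have hpos : 0 ≤ ∫ u in ρ₁..ρ₂, h u := by
      apply intervalIntegral.integral_nonneg hle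
      intro u hu
      exact hnn u ⟨lt_of_lt_of_le h₁.1 hu.1, hu.2.trans h₂.2⟩
    linarith
  -- key: cannot have I ρ ≤ c - ε everywhere
  have hkey : ∀ ε : ℝ, 0 < ε → ∃ ρ ∈ Set.Ioc (0:ℝ) 1, c - ε < I ρ := by
    intro ε hε
    by_contra hcon
    push_neg at hcon
    -- find δ with L u ≥ c - ε/2 on (0, δ)
    have : ∀ᶠ u in nhdsWithin 0 (Set.Ioi 0), c - ε/2 < L u :=
      hlim.eventually (eventually_gt_nhds (by linarith))
    obtain ⟨δ', hδ'pos, hδ'⟩ := (nhdsGT_basis (0:ℝ)).mem_iff.mp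
      (inter_mem this (Ioo_mem_nhdsGT_of_mem ⟨le_refl (0:ℝ), one_pos⟩))
    set δ := min δ' 1 with hδdef
    have hδpos : 0 < δ := lt_min hδ'pos one_pos
    have hδ1 : δ ≤ 1 := min_le_right _ _
    -- on Ioo 0 δ, h u ≥ (ε/2) * u⁻¹
    have hge : ∀ u ∈ Set.Ioo (0:ℝ) δ, (ε/2) * u⁻¹ ≤ h u := by
      intro u hu
      have hu1 : u ∈ Set.Ioc (0:ℝ) 1 := ⟨hu.1, (hu.2.le.trans hδ1)⟩
      have hLu : c - ε/2 < L u := (hδ' ⟨hu.1, hu.2.trans_le (min_le_left _ _)⟩).1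
      have hIu : I u ≤ c - ε := hcon u hu1
      have := hlb u hu1
      have h1 : (ε/2) * u⁻¹ ≤ (L u - I u) * u⁻¹ :=
        mul_le_mul_of_nonneg_right (by linarith) (inv_nonneg.2 hu.1.le)
      calc (ε/2) * u⁻¹ ≤ (L u - I u) * u⁻¹ := h1
        _ = (L u - I u) / u := (div_eq_mul_inv _ _).symm
        _ ≤ h u := this
    -- then u⁻¹ integrable on Ioc 0 δ : contradiction
    have hiint : IntegrableOn (fun u : ℝ => u⁻¹) (Set.Ioc 0 δ) volume := by
      have hmeas : AEStronglyMeasurable (fun u : ℝ => u⁻¹)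
          (volume.restrict (Set.Ioc (0:ℝ) δ)) :=
        (measurable_inv).aestronglyMeasurable
      have hintδ : IntegrableOn (fun u => (2/ε) * h u) (Set.Ioc (0:ℝ) δ) :=
        (hint.mono_set (Set.Ioc_subset_Ioc le_rfl hδ1)).const_mul (2/ε)
      refine hintδ.mono' hmeas ?_
      rw [ae_restrict_iff' measurableSet_Ioc]
      have hae : ∀ᵐ u : ℝ ∂volume, u ∉ ({δ} : Set ℝ) :=
        measure_eq_zero_iff_ae_notMem.mp (by simp)
      filter_upwards [hae] with u hu huIoc
      rcases eq_or_lt_of_le huIoc.2 with rfl | hlt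
      · exact (hu (Set.mem_singleton _)).elim
      have hu' := hge u ⟨huIoc.1, hlt⟩
      have hupos := huIoc.1
      have hinv : (0:ℝ) < u⁻¹ := inv_pos.2 hupos
      have hhu : 0 ≤ h u := le_trans (by positivity) hu'
      rw [Real.norm_eq_abs, abs_of_pos hinv]
      calc u⁻¹ = (2/ε) * ((ε/2) * u⁻¹) := by field_simp
        _ ≤ (2/ε) * h u := mul_le_mul_of_nonneg_left hu' (by positivity)
    have : IntervalIntegrable (fun u : ℝ => u⁻¹) volume 0 δ := by
      rw [intervalIntegrable_iff_integrableOn_Ioc_of_le hδpos.le]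
      exact hiint
    rw [intervalIntegrable_inv_iff] at this
    rcases this with h0 | h0
    · exact hδpos.ne h0
    · exact h0 (by rw [Set.uIcc_of_le hδpos.le]; exact ⟨le_rfl, hδpos.le⟩)
  -- conclude
  rw [tendsto_order]
  constructor
  · intro a ha
    obtain ⟨ρ₀, hρ₀, hρ₀gt⟩ := hkey (c - a) (by linarith)
    have : c - (c - a) = a := by ring
    rw [this] at hρ₀gt
    filter_upwards [Ioo_mem_nhdsGT_of_mem ⟨le_refl (0:ℝ), hρ₀.1⟩] with ρ hρ
    exact lt_of_lt_of_le hρ₀gt (hIanti ρ ⟨hρ.1, hρ.2.le.trans hρ₀.2⟩ ρ₀ hρ₀ hρ.2.le)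
  · intro b hb
    filter_upwards [Ioo_mem_nhdsGT_of_mem ⟨le_refl (0:ℝ), one_pos⟩] with ρ hρ
    exact lt_of_le_of_lt (hIle ρ ⟨hρ.1, hρ.2.le⟩) hb
end

section
/- Let ĥ : (0,1] → ℝ be nonnegative and integrable, L : (0,1] → ℝ non-increasing with lim_{u→0+} L(u) = c, fix ρ ∈ (0,1] with Δ(ρ) := L(ρ) − ∫_ρ^1 ĥ(u) du > 0, and suppose ĥ(u) ≥ (L(ρ) − ∫_u^1 ĥ(x) dx)/u for all u ∈ (0,ρ]. Then ∫_{ρ/2}^ρ ĥ(u) du ≥ Δ(ρ)/4. -/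
open MeasureTheory Set Filter

theorem halving_step
    (h L : ℝ → ℝ) (c : ℝ)
    (hnn : ∀ u ∈ Set.Ioc (0:ℝ) 1, 0 ≤ h u)
    (hint : MeasureTheory.IntegrableOn h (Set.Ioc (0:ℝ) 1))
    (hmono : AntitoneOn L (Set.Ioc (0:ℝ) 1))
    (hlim : Filter.Tendsto L (nhdsWithin 0 (Set.Ioi 0)) (nhds c))
    (ρ : ℝ) (hρ : ρ ∈ Set.Ioc (0:ℝ) 1)
    (hΔ : 0 < L ρ - ∫ u in ρ..1, h u)
    (hlb : ∀ u ∈ Set.Ioc (0:ℝ) ρ, (L ρ - ∫ x in u..1, h x) / u ≤ h u) :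
    (L ρ - ∫ u in ρ..1, h u) / 4 ≤ ∫ u in (ρ/2)..ρ, h u := by
  obtain ⟨hρ0, hρ1⟩ := hρ
  set Δ := L ρ - ∫ u in ρ..1, h u with hΔdef
  -- interval integrability on subintervals of (0,1]
  have hII : ∀ a b : ℝ, 0 ≤ a → a ≤ b → b ≤ 1 → IntervalIntegrable h volume a b := by
    intro a b ha hab hb1
    rw [intervalIntegrable_iff, uIoc_of_le hab]
    exact hint.mono_set (fun x hx => ⟨lt_of_le_of_lt ha hx.1, hx.2.trans hb1⟩)
  by_contra hcon
  push_neg at hcon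
  -- pointwise lower bound on [ρ/2, ρ]
  have key : ∀ u ∈ Set.Icc (ρ/2) ρ, 3 * Δ / (4 * ρ) ≤ h u := by
    intro u ⟨hu1, hu2⟩
    have hu0 : 0 < u := lt_of_lt_of_le (by linarith) hu1
    have huρ : u ∈ Set.Ioc (0:ℝ) ρ := ⟨hu0, hu2⟩
    have hsplit : (∫ x in u..1, h x) = (∫ x in u..ρ, h x) + ∫ x in ρ..1, h x :=
      (intervalIntegral.integral_add_adjacent_intervals
        (hII u ρ hu0.le hu2 hρ1) (hII ρ 1 hρ0.le hρ1 le_rfl)).symm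
    have hsplit2 : (∫ x in (ρ/2)..ρ, h x) = (∫ x in (ρ/2)..u, h x) + ∫ x in u..ρ, h x :=
      (intervalIntegral.integral_add_adjacent_intervals
        (hII (ρ/2) u (by linarith) hu1 (by linarith)) (hII u ρ hu0.le hu2 hρ1)).symm
    have hnn1 : 0 ≤ ∫ x in (ρ/2)..u, h x := by
      apply intervalIntegral.integral_nonneg hu1
      intro x hx
      exact hnn x ⟨lt_of_lt_of_le (by linarith) hx.1, le_trans hx.2 (hu2.trans hρ1)⟩
    have hle : (∫ x in u..ρ, h x) ≤ ∫ x in (ρ/2)..ρ, h x := by linarith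
    have h34 : 3 * Δ / 4 ≤ L ρ - ∫ x in u..1, h x := by
      rw [hsplit]; simp only [hΔdef] at hcon ⊢; linarith
    have := hlb u huρ
    calc 3 * Δ / (4 * ρ) = (3 * Δ / 4) / ρ := by ring
      _ ≤ (3 * Δ / 4) / u := by
          apply div_le_div_of_nonneg_left (by linarith) hu0 hu2
      _ ≤ (L ρ - ∫ x in u..1, h x) / u := by
          apply div_le_div_of_nonneg_right h34 hu0.le |>.trans_eq rfl
      _ ≤ h u := hlb u huρ
  -- integrate the constant bound
  have hconst : (∫ _ in (ρ/2)..ρ, (3 * Δ / (4 * ρ))) ≤ ∫ u in (ρ/2)..ρ, h u := by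
    apply intervalIntegral.integral_mono_on (by linarith)
      intervalIntegrable_const (hII (ρ/2) ρ (by linarith) (by linarith) hρ1)
    exact key
  rw [intervalIntegral.integral_const, smul_eq_mul] at hconst
  have : (ρ - ρ/2) * (3 * Δ / (4 * ρ)) = 3 * Δ / 8 := by field_simp; ring
  rw [this] at hconst
  linarith
end

section
/- Let ĥ : (0,1] → ℝ≥0 be an unbiased nonnegative estimator for data v, i.e., ∫_0^1 ĥ(u) du = f(v) and ĥ ≥ 0 on all outcomes. Then for all ρ ∈ (0,1]: ∫_ρ^1 ĥ(u) du ≤ L(ρ), where L(ρ) = inf{ f(z) : z consistent with the outcome S(ρ, v) }. -/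
open MeasureTheory Set

theorem unbiased_nonneg_le_lower_bound
    {α : Type*} (Z : Set α) (hZ : Z.Nonempty)
    (f : α → ℝ) (g : α → ℝ → ℝ) (v : α) (hv : v ∈ Z)
    (ρ : ℝ) (hρ : ρ ∈ Set.Ioc (0:ℝ) 1)
    (hnn : ∀ z ∈ Z, ∀ u ∈ Set.Ioc (0:ℝ) 1, 0 ≤ g z u)
    (hint : ∀ z ∈ Z, MeasureTheory.IntegrableOn (g z) (Set.Ioc (0:ℝ) 1))
    (hunb : ∀ z ∈ Z, (∫ u in (0:ℝ)..1, g z u) = f z)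
    (hagree : ∀ z ∈ Z, ∀ u ∈ Set.Ioc ρ 1, g z u = g v u) :
    (∫ u in ρ..1, g v u) ≤ sInf (f '' Z) := by
  obtain ⟨hρ0, hρ1⟩ := hρ
  apply le_csInf (hZ.image f)
  rintro b ⟨z, hz, rfl⟩
  have hsub : Set.Ioc ρ 1 ⊆ Set.Ioc (0:ℝ) 1 := Set.Ioc_subset_Ioc_left hρ0.le
  have h1 : (∫ u in ρ..1, g v u) = ∫ u in Set.Ioc ρ 1, g z u := by
    rw [intervalIntegral.integral_of_le hρ1]
    exact setIntegral_congr_fun measurableSet_Ioc fun u hu => (hagree z hz u hu).symm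
  rw [h1, ← hunb z hz, intervalIntegral.integral_of_le (by norm_num : (0:ℝ) ≤ 1)]
  apply setIntegral_mono_set (hint z hz)
  · filter_upwards [ae_restrict_mem measurableSet_Ioc] with u hu
    exact hnn z hz u hu
  · exact Filter.Eventually.of_forall hsub
end
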